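/- In the rational function field ℚ(a,b) in two variables, the two elements s_1 = (4a²b − 2ab − a + b)/(ab) and s_2 = (4a³b − 4a²b − a² + 5ab − 2b − 1)/(ab) are algebraically independent over ℚ. -/
import Mathlib


noncomputable section

/-- The rational function field `ℚ(a,b)` in two independent variables. -/
abbrev QabField : Type := FractionRing (MvPolynomial (Fin 2) ℚ)

/-- The variable `a`, viewed inside `ℚ(a,b)`. -/
def qA : QabField := algebraMap (MvPolynomial (Fin 2) ℚ) QabField (MvPolynomial.X 0)

/-- The variable `b`, viewed inside `ℚ(a,b)`. -/
def qB : QabField := algebraMap (MvPolynomial (Fin 2) ℚ) QabField (MvPolynomial.X 1)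

/-- The first Milnor coordinate `s₁ = (4a²b − 2ab − a + b)/(ab)` of `(ax²+x+b)/x`. -/
def milnorS₁ : QabField := (4 * qA ^ 2 * qB - 2 * qA * qB - qA + qB) / (qA * qB)

/-- The second Milnor coordinate
`s₂ = (4a³b − 4a²b − a² + 5ab − 2b − 1)/(ab)` of `(ax²+x+b)/x`. -/
def milnorS₂ : QabField :=
  (4 * qA ^ 3 * qB - 4 * qA ^ 2 * qB - qA ^ 2 + 5 * qA * qB - 2 * qB - 1) / (qA * qB)

namespace MilnorProof

open MvPolynomial

abbrev MvQ : Type := MvPolynomial (Fin 2) ℚ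

/-- Numerator of `s₁` as a polynomial. -/
def mf₁ : MvQ := 4 * X 0 ^ 2 * X 1 - 2 * X 0 * X 1 - X 0 + X 1

/-- Numerator of `s₂` as a polynomial. -/
def mf₂ : MvQ :=
  4 * X 0 ^ 3 * X 1 - 4 * X 0 ^ 2 * X 1 - X 0 ^ 2 + 5 * X 0 * X 1 - 2 * X 1 - 1

/-- The polynomial `D = (x²+1)·x·y − (2x³+1)`. -/
def mD : MvQ := (X 0 ^ 2 + 1) * (X 0 * X 1) - (2 * X 0 ^ 3 + 1)

/-- The polynomial `W = 4x² − 2x + 1 − x·y`. -/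
def mW : MvQ := 4 * X 0 ^ 2 - 2 * X 0 + 1 - X 0 * X 1

lemma algMap_injective : Function.Injective (algebraMap MvQ QabField) :=
  IsFractionRing.injective _ _

@[simp] lemma algMap_X0 : algebraMap MvQ QabField (X 0) = qA := rfl

@[simp] lemma algMap_X1 : algebraMap MvQ QabField (X 1) = qB := rfl

lemma qA_ne : qA ≠ 0 := by
  rw [qA, Ne, map_eq_zero_iff _ algMap_injective]
  exact X_ne_zero 0

lemma qB_ne : qB ≠ 0 := by
  rw [qB, Ne, map_eq_zero_iff _ algMap_injective]
  exact X_ne_zero 1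

lemma qAB_ne : qA * qB ≠ 0 := mul_ne_zero qA_ne qB_ne

/-- `W` evaluated in the fraction field. -/
def qW : QabField := 4 * qA ^ 2 - 2 * qA + 1 - qA * qB

lemma qW_eq : qW = algebraMap MvQ QabField mW := by
  simp [qW, mW, map_sub, map_add, map_mul, map_pow, map_one, map_ofNat]

lemma mW_ne : mW ≠ 0 := by
  intro h
  have h1 := congrArg constantCoeff h
  simp [mW] at h1

lemma qW_ne : qW ≠ 0 := by
  rw [qW_eq, Ne, map_eq_zero_iff _ algMap_injective]
  exact mW_ne

/-- The "inverse Möbius" substitute for `b`. -/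
def qB' : QabField := qA / qW

lemma algebraMap_C' (c : ℚ) :
    algebraMap MvQ QabField (C c) = algebraMap ℚ QabField c := by
  rw [← MvPolynomial.algebraMap_eq, ← IsScalarTower.algebraMap_apply]

lemma hF₁ : algebraMap MvQ QabField mf₁ = qA * qB * milnorS₁ := by
  have h : algebraMap MvQ QabField mf₁ = 4 * qA ^ 2 * qB - 2 * qA * qB - qA + qB := by
    simp [mf₁, map_sub, map_add, map_mul, map_pow, map_ofNat]
  rw [h, milnorS₁, mul_div_cancel₀ _ qAB_ne]

lemma hF₂ : algebraMap MvQ QabField mf₂ = qA * qB * milnorS₂ := by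
  have h : algebraMap MvQ QabField mf₂ =
      4 * qA ^ 3 * qB - 4 * qA ^ 2 * qB - qA ^ 2 + 5 * qA * qB - 2 * qB - 1 := by
    simp [mf₂, map_sub, map_add, map_mul, map_pow, map_one, map_ofNat]
  rw [h, milnorS₂, mul_div_cancel₀ _ qAB_ne]

lemma hBW : qB' * qW = qA := by
  rw [qB']; exact div_mul_cancel₀ qA qW_ne

lemma hWexp : qW = 4 * qA ^ 2 - 2 * qA + 1 - qA * qB := rfl

lemma hA1 : aeval ![qA, qB'] mf₁ = 4 * qA ^ 2 * qB' - 2 * qA * qB' - qA + qB' := by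
  simp [mf₁, map_sub, map_add, map_mul, map_pow, map_ofNat]

lemma hA2 : aeval ![qA, qB'] mf₂ =
    4 * qA ^ 3 * qB' - 4 * qA ^ 2 * qB' - qA ^ 2 + 5 * qA * qB' - 2 * qB' - 1 := by
  simp [mf₂, map_sub, map_add, map_mul, map_pow, map_one, map_ofNat]

lemma hMD : algebraMap MvQ QabField mD = (qA ^ 2 + 1) * (qA * qB) - (2 * qA ^ 3 + 1) := by
  simp [mD, map_sub, map_add, map_mul, map_pow, map_one, map_ofNat]

lemma hE1 : aeval ![qA, qB'] mf₁ * qW = qA ^ 2 * qB := by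
  rw [hA1]
  linear_combination (4 * qA ^ 2 - 2 * qA + 1) * hBW - qA * hWexp

lemma hE2 : aeval ![qA, qB'] mf₂ * qW = algebraMap MvQ QabField mD := by
  rw [hA2, hMD]
  linear_combination (4 * qA ^ 3 - 4 * qA ^ 2 + 5 * qA - 2) * hBW - (qA ^ 2 + 1) * hWexp

lemma hE3 : qA * qB' * qW = qA ^ 2 := by
  linear_combination qA * hBW

lemma key (p : MvQ) (hp : aeval ![milnorS₁, milnorS₂] p = 0) : p = 0 := by
  classical
  set N := p.totalDegree with hN
  have hsupN : ∀ m ∈ p.support, m 0 + m 1 ≤ N := by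
    intro m hm
    have h1 : (m.sum fun _ e => e) ≤ N := le_totalDegree hm
    have h2 : (m.sum fun _ e => e) = m 0 + m 1 := by
      rw [Finsupp.sum_fintype _ _ (fun _ => rfl), Fin.sum_univ_two]
    omega
  -- first homogenization
  set G : MvQ := ∑ m ∈ p.support,
      C (p.coeff m) * mf₁ ^ m 0 * mf₂ ^ m 1 * (X 0 * X 1) ^ (N - m 0 - m 1) with hG
  have hGmap : algebraMap MvQ QabField G
      = (qA * qB) ^ N * aeval ![milnorS₁, milnorS₂] p := by
    rw [hG, map_sum, aeval_def, eval₂_eq' (algebraMap ℚ QabField) ![milnorS₁, milnorS₂] p,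
      Finset.mul_sum]
    refine Finset.sum_congr rfl fun m hm => ?_
    have hmn : m 0 + m 1 ≤ N := hsupN m hm
    rw [map_mul, map_mul, map_mul, map_pow, map_pow, map_pow, hF₁, hF₂, map_mul,
      algMap_X0, algMap_X1, algebraMap_C', Fin.prod_univ_two]
    simp only [Matrix.cons_val_zero, Matrix.cons_val_one, Matrix.head_cons]
    have hpow : (qA * qB) ^ m 0 * ((qA * qB) ^ m 1 * (qA * qB) ^ (N - m 0 - m 1))
        = (qA * qB) ^ N := by
      rw [← pow_add, ← pow_add]; congr 1; omega
    calc algebraMap ℚ QabField (p.coeff m) * (qA * qB * milnorS₁) ^ m 0 *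
          (qA * qB * milnorS₂) ^ m 1 * (qA * qB) ^ (N - m 0 - m 1)
        = ((qA * qB) ^ m 0 * ((qA * qB) ^ m 1 * (qA * qB) ^ (N - m 0 - m 1))) *
          (algebraMap ℚ QabField (p.coeff m) * (milnorS₁ ^ m 0 * milnorS₂ ^ m 1)) := by
          rw [mul_pow, mul_pow]; ring
      _ = (qA * qB) ^ N *
          (algebraMap ℚ QabField (p.coeff m) * (milnorS₁ ^ m 0 * milnorS₂ ^ m 1)) := by
          rw [hpow]
      _ = (qA * qB) ^ N *
          (algebraMap ℚ QabField (p.coeff m) * (milnorS₁ ^ m 0 * milnorS₂ ^ m 1)) := rfl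
  have hG0 : G = 0 := by
    apply algMap_injective
    rw [hGmap, hp, mul_zero, map_zero]
  have hGeval : aeval ![qA, qB'] G = 0 := by rw [hG0, map_zero]
  -- second homogenization
  set G2 : MvQ := ∑ m ∈ p.support,
      C (p.coeff m) * (X 0 ^ 2 * X 1) ^ m 0 * mD ^ m 1 * X 0 ^ (2 * (N - m 0 - m 1)) with hG2
  have hG2map : algebraMap MvQ QabField G2 = aeval ![qA, qB'] G * qW ^ N := by
    rw [hG, hG2, map_sum, map_sum, Finset.sum_mul]
    refine Finset.sum_congr rfl fun m hm => ?_
    have hmn : m 0 + m 1 ≤ N := hsupN m hm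
    have hpow : qW ^ m 0 * (qW ^ m 1 * qW ^ (N - m 0 - m 1)) = qW ^ N := by
      rw [← pow_add, ← pow_add]; congr 1; omega
    simp only [map_mul, map_pow, aeval_C, algebraMap_C', aeval_X, algMap_X0, algMap_X1,
      Matrix.cons_val_zero, Matrix.cons_val_one, Matrix.head_cons]
    rw [pow_mul]
    rw [← hE1, ← hE2, ← hE3, ← hpow]
    ring
  have hG20 : G2 = 0 := by
    apply algMap_injective
    rw [hG2map, hGeval, zero_mul, map_zero]
  -- Step 3: conclude p = 0 from the vanishing of the homogenized polynomial G2.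
  by_contra hne
  set J := p.degreeOf 1 with hJ
  have hJle : ∀ m ∈ p.support, m 1 ≤ J := by
    intro m hm
    rw [hJ, degreeOf_eq_sup]
    exact Finset.le_sup (f := fun m => m 1) hm
  have hJN : J ≤ N := degreeOf_le_totalDegree p 1
  obtain ⟨m', hm'supp, hm'⟩ : ∃ m ∈ p.support, m 1 = J := by
    rw [hJ, degreeOf_eq_sup]
    obtain ⟨m, hm, hms⟩ :=
      Finset.exists_mem_eq_sup p.support (support_nonempty.mpr hne) fun m => m 1
    exact ⟨m, hm, hms.symm⟩
  set ε := finSuccEquiv ℚ 1 with hε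
  set t : MvPolynomial (Fin 1) ℚ := X 0 with ht
  have hεX1 : ε (X 1 : MvQ) = Polynomial.C t := by
    have h1 : (1 : Fin 2) = Fin.succ 0 := rfl
    rw [h1, finSuccEquiv_X_succ]
  have hεC : ∀ c : ℚ, ε (C c) = Polynomial.C (C c) := by
    intro c
    simp [hε, finSuccEquiv_apply]
  have hεX0 : ε (X 0 : MvQ) = Polynomial.X := by
    rw [hε]; exact finSuccEquiv_X_zero
  have hDe : ε mD = Polynomial.C (t - 2) * Polynomial.X ^ 3 +
      (Polynomial.C t * Polynomial.X - 1) := by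
    simp only [mD, map_sub, map_add, map_mul, map_pow, map_one, map_ofNat, hεX0, hεX1]
    ring
  have hDdeg : (ε mD).natDegree ≤ 3 := by
    rw [hDe]
    compute_degree
  have hDcoeff : (ε mD).coeff 3 = t - 2 := by
    rw [hDe]
    simp [sub_mul, Polynomial.coeff_X, Polynomial.coeff_one, Polynomial.coeff_C_mul,
      Polynomial.coeff_X_pow, Polynomial.coeff_C]
  have ht2 : (t - 2 : MvPolynomial (Fin 1) ℚ) ≠ 0 := by
    intro h
    have h1 := congrArg constantCoeff h
    rw [map_sub, map_ofNat, map_zero] at h1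
    simp [ht] at h1
  -- image of G2 under ε
  have hεG2 : ε G2 = ∑ m ∈ p.support,
      Polynomial.C (C (p.coeff m) * t ^ m 0) *
        (Polynomial.X ^ (2 * (N - m 1)) * (ε mD) ^ m 1) := by
    rw [hG2, map_sum]
    refine Finset.sum_congr rfl fun m hm => ?_
    have hmn : m 0 + m 1 ≤ N := hsupN m hm
    simp only [map_mul, map_pow, hεX0, hεX1, hεC]
    have hexp : 2 * (N - m 1) = 2 * m 0 + 2 * (N - m 0 - m 1) := by omega
    rw [hexp, pow_add]
    ring
  have hco : ∀ m ∈ p.support,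
      (Polynomial.C (C (p.coeff m) * t ^ m 0) *
        (Polynomial.X ^ (2 * (N - m 1)) * (ε mD) ^ m 1)).coeff (2 * N + J)
      = if m 1 = J then C (p.coeff m) * t ^ m 0 * (t - 2) ^ J else 0 := by
    intro m hm
    have hj : m 1 ≤ J := hJle m hm
    have hidx : 2 * N + J = (J + 2 * m 1) + 2 * (N - m 1) := by omega
    rw [Polynomial.coeff_C_mul, hidx, Polynomial.coeff_X_pow_mul]
    rcases eq_or_lt_of_le hj with heq | hlt
    · rw [if_pos heq, heq]
      have h3 : J + 2 * J = J * 3 := by ring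
      rw [h3, Polynomial.coeff_pow_of_natDegree_le hDdeg, hDcoeff, mul_assoc]
    · rw [if_neg hlt.ne]
      have hdeg : ((ε mD) ^ m 1).natDegree < J + 2 * m 1 := by
        have h1 : ((ε mD) ^ m 1).natDegree ≤ m 1 * 3 :=
          Polynomial.natDegree_pow_le.trans (Nat.mul_le_mul le_rfl hDdeg)
        omega
      rw [Polynomial.coeff_eq_zero_of_natDegree_lt hdeg, mul_zero]
  have hsum0 : ∑ m ∈ p.support,
      (if m 1 = J then C (p.coeff m) * t ^ m 0 * (t - 2) ^ J else 0) = 0 := by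
    rw [← Finset.sum_congr rfl hco]
    have h0 : (ε G2).coeff (2 * N + J) = 0 := by
      rw [hG20, map_zero, Polynomial.coeff_zero]
    rw [hεG2, Polynomial.finset_sum_coeff] at h0
    exact h0
  rw [← Finset.sum_filter, ← Finset.sum_mul] at hsum0
  have hS : ∑ m ∈ p.support.filter (fun m => m 1 = J), C (p.coeff m) * t ^ m 0 = 0 := by
    rcases mul_eq_zero.mp hsum0 with h | h
    · exact h
    · exact absurd h (pow_ne_zero _ ht2)
  have hc := congrArg (MvPolynomial.coeff (Finsupp.single 0 (m' 0))) hS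
  rw [MvPolynomial.coeff_sum, MvPolynomial.coeff_zero] at hc
  have heval : ∀ m : Fin 2 →₀ ℕ,
      MvPolynomial.coeff (Finsupp.single 0 (m' 0)) (C (p.coeff m) * t ^ m 0)
      = p.coeff m *
        (if Finsupp.single (0 : Fin 1) (m 0) = Finsupp.single 0 (m' 0) then 1 else 0) := by
    intro m
    rw [ht, MvPolynomial.coeff_C_mul, MvPolynomial.coeff_X_pow]
  have hzero : ∀ b ∈ p.support.filter (fun m => m 1 = J), b ≠ m' →
      MvPolynomial.coeff (Finsupp.single 0 (m' 0)) (C (p.coeff b) * t ^ b 0) = 0 := by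
    intro b hb hbne
    rw [Finset.mem_filter] at hb
    rw [heval b]
    have hb0 : b 0 ≠ m' 0 := by
      intro h0
      apply hbne
      ext i
      fin_cases i
      · exact h0
      · show b 1 = m' 1
        rw [hb.2, hm']
    rw [if_neg, mul_zero]
    intro hsing
    exact hb0 (by
      have h00 := congrArg (fun f : Fin 1 →₀ ℕ => f 0) hsing
      simpa using h00)
  have hm'filter : m' ∈ p.support.filter (fun m => m 1 = J) :=
    Finset.mem_filter.mpr ⟨hm'supp, hm'⟩
  rw [Finset.sum_eq_single m' hzero (fun h => absurd hm'filter h), heval m',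
    if_pos rfl, mul_one] at hc
  exact (mem_support_iff.mp hm'supp) hc

end MilnorProof

/-- In `ℚ(a,b)`, the elements `s₁ = (4a²b − 2ab − a + b)/(ab)` and
`s₂ = (4a³b − 4a²b − a² + 5ab − 2b − 1)/(ab)` are algebraically independent over `ℚ`:
there is no nonzero polynomial `P ∈ ℚ[u,v]` with `P(s₁, s₂) = 0`. -/
theorem milnor_coordinates_algebraically_independent :
    AlgebraicIndependent ℚ ![milnorS₁, milnorS₂] := by
  exact algebraicIndependent_iff.mpr fun p hp => MilnorProof.key p hp

end
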